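/- arXiv:2207.13039 — 7 statements merged into one kernel-verified Lean document; each statement's English description precedes it below -/
import Mathlib

section
/- Let $A=[a_{i,j}]_{1\le i,j\le n}$ be a matrix over a commutative ring such that $a_{i,j}=0$ whenever $i+j$ is an even number greater than two. If $n=2m$ for some positive integer $m$, then the permanent of $A$ factors as $\mathrm{per}(A)=\mathrm{per}[a_{2i,2j-1}]_{1\le i,j\le m}\cdot\mathrm{per}[a_{2i-1,2j}]_{1\le i,j\le m}$. -/
/-!
Listing the even-numbered rows and columns before the odd-numbered ones (counting from 1) turns
`A` into a block matrix `[[0, B], [C, D]]`: the zero block collects the entries whose indices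
are both even, and `B`, `C` are the two matrices of the statement. Swapping the two block rows
gives the block triangular matrix `[[C, D], [0, B]]`, whose permanent is `per C * per B`
whatever `D` is.
-/

open Equiv Equiv.Perm Finset

namespace Matrix

variable {m n R : Type*} [DecidableEq m] [Fintype m] [DecidableEq n] [Fintype n] [CommSemiring R]

theorem permanent_submatrix_equiv_self (e : m ≃ n) (M : Matrix n n R) :
    (M.submatrix e e).permanent = M.permanent :=
  Fintype.sum_equiv e.permCongr _ _ fun σ ↦
    Fintype.prod_equiv e _ _ fun i ↦ by simp [permCongr_apply]

theorem permanent_fromBlocks_zero₂₁ (A : Matrix m m R) (B : Matrix m n R) (D : Matrix n n R) :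
    (fromBlocks A B 0 D).permanent = A.permanent * D.permanent := by
  have hvanish : ∀ σ ∉ (sumCongrHom m n).range,
      ∏ i, fromBlocks A B 0 D (σ i) i = 0 := by
    intro σ hσ
    obtain ⟨a, ha⟩ : ∃ a, σ (Sum.inl a) ∉ Set.range Sum.inl := by
      by_contra! h
      exact hσ (mem_sumCongrHom_range_of_perm_mapsTo_inl fun _ ⟨a, ha⟩ ↦ ha ▸ h a)
    obtain ⟨b, hb⟩ : ∃ b, σ (Sum.inl a) = Sum.inr b := by
      cases h : σ (Sum.inl a) with
      | inl a' => exact absurd ⟨a', h.symm⟩ ha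
      | inr b => exact ⟨b, rfl⟩
    exact prod_eq_zero (mem_univ (Sum.inl a)) (by rw [hb, fromBlocks_apply₂₁, zero_apply])
  calc (fromBlocks A B 0 D).permanent
      = ∑ σ ∈ univ.image (sumCongrHom m n), ∏ i, fromBlocks A B 0 D (σ i) i :=
        (sum_subset (subset_univ _) fun σ _ hσ ↦
          hvanish σ (by simpa [MonoidHom.mem_range] using hσ)).symm
    _ = ∑ p : Perm m × Perm n, ∏ i, fromBlocks A B 0 D (sumCongrHom m n p i) i :=
        sum_image sumCongrHom_injective.injOn
    _ = A.permanent * D.permanent := by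
        simp [permanent, Fintype.sum_prod_type, Fintype.prod_sum_type, sum_mul_sum]

theorem permanent_fromBlocks_zero₁₁ (B C D : Matrix n n R) :
    (fromBlocks 0 B C D).permanent = B.permanent * C.permanent := by
  rw [← permanent_permute_cols (sumComm n n), sumComm_apply, fromBlocks_submatrix_sum_swap_left,
    submatrix_id_id, permanent_fromBlocks_zero₂₁, mul_comm]

end Matrix

def finSumFinEquivOddEven (m : ℕ) : Fin m ⊕ Fin m ≃ Fin (2 * m) where
  toFun := Sum.elim (fun i ↦ ⟨2 * i + 1, by omega⟩) (fun i ↦ ⟨2 * i, by omega⟩)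
  invFun k := if (k : ℕ) % 2 = 1 then .inl ⟨k / 2, by omega⟩ else .inr ⟨k / 2, by omega⟩
  left_inv := by rintro (i | i) <;> simp [Fin.ext_iff]; omega
  right_inv k := by
    dsimp only
    split_ifs <;> ext <;> simp <;> omega

/-- If `A = [a_{i,j}]_{1 ≤ i,j ≤ n}` (rows/columns indexed `1..n`, here realized
as `Fin n` with `i` standing for the `(i+1)`-st row/column) is a matrix over a commutative ring
with `a_{i,j} = 0` whenever `i + j` is an even number greater than two, and `n = 2m` with
`m ≥ 1`, then `per(A) = per[a_{2i,2j-1}]_{1≤i,j≤m} * per[a_{2i-1,2j}]_{1≤i,j≤m}`. -/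
theorem stmt0 {R : Type*} [CommRing R] (m : ℕ)
    (A : Matrix (Fin (2 * m)) (Fin (2 * m)) R)
    (hA : ∀ i j : Fin (2 * m), Even (((i : ℕ) + 1) + ((j : ℕ) + 1)) →
      ((i : ℕ) + 1) + ((j : ℕ) + 1) > 2 → A i j = 0) :
    A.permanent =
      (Matrix.of fun i j : Fin m =>
          A ⟨2 * (i : ℕ) + 1, by have := i.isLt; omega⟩
            ⟨2 * (j : ℕ), by have := j.isLt; omega⟩).permanent *
      (Matrix.of fun i j : Fin m =>
          A ⟨2 * (i : ℕ), by have := i.isLt; omega⟩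
            ⟨2 * (j : ℕ) + 1, by have := j.isLt; omega⟩).permanent := by
  set e := finSumFinEquivOddEven m
  have hzero : (A.submatrix e e).toBlocks₁₁ = 0 := by
    ext i j
    exact hA _ _ ⟨i + j + 2, by simp [e, finSumFinEquivOddEven]; omega⟩
      (by simp [e, finSumFinEquivOddEven]; omega)
  rw [← Matrix.permanent_submatrix_equiv_self e A,
    ← Matrix.fromBlocks_toBlocks (A.submatrix e e), hzero, Matrix.permanent_fromBlocks_zero₁₁]
  rfl
end

section
/- Let $A=[a_{i,j}]_{1\le i,j\le n}$ be a matrix over a commutative ring such that $a_{i,j}=0$ whenever $i+j$ is an even number greater than two. If $n=2m+1$ for some positive integer $m$, then $\det(A)=(-1)^m a_{1,1}\cdot\det[a_{2i,2j+1}]_{1\le i,j\le m}\cdot\det[a_{2i+1,2j}]_{1\le i,j\le m}$. -/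
/-!
In the paper's numbering, order the rows as `1, 2, 4, …, 2m, 3, 5, …, 2m+1` and the columns as
`1, 3, 5, …, 2m+1, 2, 4, …, 2m`. The vanishing hypothesis makes the reordered matrix block
triangular with diagonal blocks `a₁₁`, `[a_{2i,2j+1}]` and `[a_{2i+1,2j}]`, and the two orders
differ by exchanging two blocks of size `m`, a permutation of sign `(-1)^m`.
-/

open Equiv Matrix

theorem Equiv.Perm.sign_sumComm (α : Type*) [Fintype α] [DecidableEq α] :
    Perm.sign (sumComm α α : Perm (α ⊕ α)) = (-1) ^ Fintype.card α := by
  have h : (sumComm α α : Perm (α ⊕ α)) =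
      (boolProdEquivSum α).permCongr (prodCongrLeft fun _ => swap false true) := by
    ext (a | a) <;> simp [permCongr_apply, prodCongrLeft, swap_apply_def]
  rw [h, Perm.sign_permCongr, Perm.sign_prodCongrLeft, Perm.sign_swap Bool.false_ne_true,
    Finset.prod_const, Finset.card_univ]

theorem Matrix.det_of_toBlocks₂₁_eq_zero_of_toBlocks₁₂_eq_zero {R l m n : Type*} [CommRing R]
    [Fintype l] [Fintype m] [Fintype n] [DecidableEq l] [DecidableEq m] [DecidableEq n]
    (M : Matrix ((l ⊕ m) ⊕ n) ((l ⊕ m) ⊕ n) R)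
    (h₂₁ : M.toBlocks₂₁ = 0) (h₁₂ : M.toBlocks₁₁.toBlocks₁₂ = 0) :
    M.det = M.toBlocks₁₁.toBlocks₁₁.det * M.toBlocks₁₁.toBlocks₂₂.det * M.toBlocks₂₂.det := by
  rw [← fromBlocks_toBlocks M, h₂₁, det_fromBlocks_zero₂₁, ← fromBlocks_toBlocks M.toBlocks₁₁,
    h₁₂, det_fromBlocks_zero₁₂]
  simp

noncomputable def finOddEvenEquiv (m : ℕ) : (Fin 1 ⊕ Fin m) ⊕ Fin m ≃ Fin (2 * m + 1) :=
  Equiv.ofBijective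
    (Sum.elim (Sum.elim (fun _ => 0) fun i => ⟨2 * i + 1, by omega⟩) fun i => ⟨2 * i + 2, by omega⟩)
    (by
      rw [Fintype.bijective_iff_injective_and_card]
      refine ⟨?_, by simp; omega⟩
      rintro ((x | i) | i) ((y | j) | j) h <;> simp [Fin.ext_iff] at h ⊢ <;> omega)

@[simp] lemma finOddEvenEquiv_inl_inl (m : ℕ) (x : Fin 1) :
    finOddEvenEquiv m (.inl (.inl x)) = 0 := rfl

@[simp] lemma finOddEvenEquiv_inl_inr (m : ℕ) (i : Fin m) :
    finOddEvenEquiv m (.inl (.inr i)) = ⟨2 * i + 1, by omega⟩ := rfl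

@[simp] lemma finOddEvenEquiv_inr (m : ℕ) (i : Fin m) :
    finOddEvenEquiv m (.inr i) = ⟨2 * i + 2, by omega⟩ := rfl

/-- If `A = [a_{i,j}]_{1 ≤ i,j ≤ n}` (rows/columns indexed `1..n`, realized as
`Fin n` with `i` standing for the `(i+1)`-st row/column) is a matrix over a commutative ring
with `a_{i,j} = 0` whenever `i + j` is an even number greater than two, and `n = 2m+1` with
`m ≥ 1`, then `det(A) = (-1)^m a_{1,1} * det[a_{2i,2j+1}]_{1≤i,j≤m} * det[a_{2i+1,2j}]_{1≤i,j≤m}`. -/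
theorem stmt3 {R : Type*} [CommRing R] (m : ℕ)
    (A : Matrix (Fin (2 * m + 1)) (Fin (2 * m + 1)) R)
    (hA : ∀ i j : Fin (2 * m + 1), Even (((i : ℕ) + 1) + ((j : ℕ) + 1)) →
      ((i : ℕ) + 1) + ((j : ℕ) + 1) > 2 → A i j = 0) :
    A.det =
      (-1) ^ m * A ⟨0, by omega⟩ ⟨0, by omega⟩ *
      ((Matrix.of fun i j : Fin m =>
          A ⟨2 * (i : ℕ) + 1, by have := i.isLt; omega⟩
            ⟨2 * (j : ℕ) + 2, by have := j.isLt; omega⟩).det *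
      (Matrix.of fun i j : Fin m =>
          A ⟨2 * (i : ℕ) + 2, by have := i.isLt; omega⟩
            ⟨2 * (j : ℕ) + 1, by have := j.isLt; omega⟩).det) := by
  set τ : Perm ((Fin 1 ⊕ Fin m) ⊕ Fin m) :=
    (sumAssoc _ _ _).symm.permCongr (sumCongr 1 (sumComm (Fin m) (Fin m)))
  have hτ : Perm.sign τ = (-1) ^ m := by
    simp [τ, Perm.sign_permCongr, Perm.sign_sumCongr, Perm.sign_sumComm]
  set M := A.submatrix (finOddEvenEquiv m) (finOddEvenEquiv m ∘ τ)
  have hzero : ∀ i j : Fin (2 * m + 1), ((i : ℕ) + j) % 2 = 0 → 0 < (i : ℕ) + j → A i j = 0 :=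
    fun i j heven hpos => hA i j (Nat.even_iff.mpr (by omega)) (by omega)
  have h₁₂ : M.toBlocks₁₁.toBlocks₁₂ = 0 := by
    ext x j
    exact hzero _ _ (by simp [τ]) (by simp [τ])
  have h₂₁ : M.toBlocks₂₁ = 0 := by
    ext i (x | j)
    · exact hzero _ _ (by simp [τ]) (by simp [τ])
    · exact hzero _ _ (by simp [τ]; omega) (by simp [τ])
  calc A.det = (M.submatrix id τ.symm).det := by
        rw [← det_submatrix_equiv_self (finOddEvenEquiv m) A]
        congr 1
        ext x y
        simp [M]
    _ = (-1) ^ m * M.det := by rw [det_permute', Perm.sign_symm, hτ]; push_cast; rfl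
    _ = _ := by
        rw [det_of_toBlocks₂₁_eq_zero_of_toBlocks₁₂_eq_zero M h₂₁ h₁₂, det_unique]
        simp only [mul_assoc]
        rfl
end

section
/- Let $A=[a_{i,j}]_{1\le i,j\le n}$ be a symmetric matrix over a commutative ring (i.e. $a_{j,i}=a_{i,j}$ for all $i,j$) such that $a_{i,j}=0$ whenever $i+j$ is an even number greater than two. If $n>1$ is odd, then $\mathrm{per}(A)=a_{1,1}\left(\mathrm{per}[a_{2i,2j+1}]_{1\le i,j\le (n-1)/2}\right)^2$. -/
/-!
Split the indices into `1`, the even indices and the odd indices `≥ 3`. By the vanishing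
hypothesis, an even index is only joined to odd ones, an odd index `≥ 3` only to even ones, and
`1` only to `1` and even ones.
Counting then shows that every permutation with nonzero weight fixes `1` and swaps even and odd
indices `≥ 3`, so it is a pair of bijections between the two halves; the permanent factors as
`a₁₁ · per[a_{2i+1,2j}] · per[a_{2i,2j+1}]`, and symmetry makes the two factors equal.
-/

open Equiv Finset

namespace Matrix

variable {R : Type*} [CommSemiring R]

theorem permanent_submatrix_equiv_self_s6 {m n : Type*} [DecidableEq m] [Fintype m]
    [DecidableEq n] [Fintype n] (e : n ≃ m) (A : Matrix m m R) :
    (A.submatrix e e).permanent = A.permanent :=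
  Fintype.sum_equiv (permCongr e) _ _ fun σ =>
    Fintype.prod_equiv e _ _ fun i => by simp [permCongr_apply]

section OptionSum

variable {α : Type*}

def optionSwapPerm (g h : Perm α) : Perm (Option (α ⊕ α)) :=
  optionCongr ((sumCongr g h).trans (sumComm α α))

@[simp] lemma optionSwapPerm_none (g h : Perm α) : optionSwapPerm g h none = none := rfl

@[simp] lemma optionSwapPerm_inl (g h : Perm α) (a : α) :
    optionSwapPerm g h (some (.inl a)) = some (.inr (g a)) := rfl

@[simp] lemma optionSwapPerm_inr (g h : Perm α) (b : α) :
    optionSwapPerm g h (some (.inr b)) = some (.inl (h b)) := rfl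

lemma optionSwapPerm_injective :
    Function.Injective fun p : Perm α × Perm α => optionSwapPerm p.1 p.2 := by
  rintro ⟨g, h⟩ ⟨g', h'⟩ hgh
  have hg : ∀ a, g a = g' a := fun a => by
    simpa using congrArg (· (some (.inl a))) hgh
  have hh : ∀ b, h b = h' b := fun b => by
    simpa using congrArg (· (some (.inr b))) hgh
  exact Prod.ext (Equiv.ext hg) (Equiv.ext hh)

variable [Fintype α] {M : Matrix (Option (α ⊕ α)) (Option (α ⊕ α)) R}

lemma exists_optionSwapPerm_eq_of_prod_ne_zero
    (h1 : ∀ b, M none (some (.inr b)) = 0) (h2 : ∀ b, M (some (.inr b)) none = 0)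
    (h3 : ∀ a b, M (some (.inl a)) (some (.inl b)) = 0)
    (h4 : ∀ a b, M (some (.inr a)) (some (.inr b)) = 0)
    {σ : Perm (Option (α ⊕ α))} (hσ : ∏ x, M (σ x) x ≠ 0) :
    ∃ p : Perm α × Perm α, optionSwapPerm p.1 p.2 = σ := by
  have hne : ∀ x, M (σ x) x ≠ 0 := fun x hx => hσ (prod_eq_zero (mem_univ x) hx)
  have hinr : ∀ b, ∃ a, σ (some (.inr b)) = some (.inl a) := by
    intro b
    rcases hx : σ (some (.inr b)) with _ | a | a
    · exact absurd (hx ▸ h1 b) (hne _)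
    · exact ⟨a, rfl⟩
    · exact absurd (hx ▸ h4 a b) (hne _)
  choose h hh using hinr
  have h_bij : Function.Bijective h := Finite.injective_iff_bijective.mp fun b b' hb =>
    Sum.inr_injective <| Option.some_injective _ <| σ.injective <| (hh b).trans (hb ▸ hh b').symm
  -- the `inr` columns already use up every `inl` row, so column `none` must use row `none`
  have hnone : σ none = none := by
    rcases hx : σ none with _ | a | b
    · rfl
    · obtain ⟨b, rfl⟩ := h_bij.2 a
      simpa using σ.injective (hx.trans (hh b).symm)
    · exact absurd (hx ▸ h2 b) (hne _)
  have hinl : ∀ a, ∃ b, σ (some (.inl a)) = some (.inr b) := by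
    intro a
    rcases hx : σ (some (.inl a)) with _ | a' | b
    · simpa using σ.injective (hx.trans hnone.symm)
    · exact absurd (hx ▸ h3 a' a) (hne _)
    · exact ⟨b, rfl⟩
  choose g hg using hinl
  have g_bij : Function.Bijective g := Finite.injective_iff_bijective.mp fun a a' ha =>
    Sum.inl_injective <| Option.some_injective _ <| σ.injective <| (hg a).trans (ha ▸ hg a').symm
  refine ⟨(ofBijective g g_bij, ofBijective h h_bij), Equiv.ext ?_⟩
  rintro (_ | a | b)
  · exact hnone.symm
  · exact (hg a).symm
  · exact (hh b).symm

theorem permanent_eq_mul_permanent_mul_permanent_of_optionSum [DecidableEq α]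
    (h1 : ∀ b, M none (some (.inr b)) = 0) (h2 : ∀ b, M (some (.inr b)) none = 0)
    (h3 : ∀ a b, M (some (.inl a)) (some (.inl b)) = 0)
    (h4 : ∀ a b, M (some (.inr a)) (some (.inr b)) = 0) :
    M.permanent = M none none * (of fun a b => M (some (.inr a)) (some (.inl b))).permanent *
      (of fun a b => M (some (.inl a)) (some (.inr b))).permanent := by
  calc M.permanent = ∑ p : Perm α × Perm α, ∏ x, M (optionSwapPerm p.1 p.2 x) x := by
        refine (Fintype.sum_of_injective _ optionSwapPerm_injective _ _ (fun σ hσ => ?_)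
          fun _ => rfl).symm
        by_contra h
        exact hσ (exists_optionSwapPerm_eq_of_prod_ne_zero h1 h2 h3 h4 h)
    _ = ∑ p : Perm α × Perm α, M none none * ((∏ a, M (some (.inr (p.1 a))) (some (.inl a))) *
          ∏ b, M (some (.inl (p.2 b))) (some (.inr b))) := by
        simp only [Fintype.prod_option, Fintype.prod_sum_type, optionSwapPerm_none,
          optionSwapPerm_inl, optionSwapPerm_inr]
    _ = _ := by
        rw [← mul_sum, mul_assoc]
        simp only [permanent, of_apply, Fintype.sum_mul_sum, Fintype.sum_prod_type]

end OptionSum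

end Matrix

/-- In 1-based indexing: `none ↦ 1`, `inl a ↦ 2a + 2` (the even indices) and
`inr b ↦ 2b + 3` (the odd indices other than `1`). -/
def parityIndex {m n : ℕ} (hn : n = 2 * m + 1) : Option (Fin m ⊕ Fin m) → Fin n
  | none => ⟨0, by omega⟩
  | some (.inl a) => ⟨2 * a + 1, by omega⟩
  | some (.inr b) => ⟨2 * b + 2, by omega⟩

lemma parityIndex_bijective {m n : ℕ} (hn : n = 2 * m + 1) :
    Function.Bijective (parityIndex hn) := by
  refine (Fintype.bijective_iff_injective_and_card _).mpr ⟨?_, by simp; omega⟩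
  rintro (_ | a | b) (_ | a' | b') h <;> simp [parityIndex, Fin.ext_iff] at h ⊢ <;> omega

/-- If `A = [a_{i,j}]_{1 ≤ i,j ≤ n}` (rows/columns indexed `1..n`, realized as
`Fin n` with `i` standing for the `(i+1)`-st row/column) is a symmetric matrix over a
commutative ring with `a_{i,j} = 0` whenever `i + j` is an even number greater than two,
and `n > 1` is odd, then `per(A) = a_{1,1} * (per[a_{2i,2j+1}]_{1≤i,j≤(n-1)/2})^2`. -/
theorem stmt6 {R : Type*} [CommRing R] (n : ℕ) (hn1 : 1 < n) (hn : Odd n)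
    (A : Matrix (Fin n) (Fin n) R)
    (hsymm : ∀ i j : Fin n, A j i = A i j)
    (hA : ∀ i j : Fin n, Even (((i : ℕ) + 1) + ((j : ℕ) + 1)) →
      ((i : ℕ) + 1) + ((j : ℕ) + 1) > 2 → A i j = 0) :
    A.permanent =
      A ⟨0, by omega⟩ ⟨0, by omega⟩ *
      (Matrix.of fun i j : Fin ((n - 1) / 2) =>
          A ⟨2 * (i : ℕ) + 1, by obtain ⟨k, hk⟩ := hn; have := i.isLt; omega⟩
            ⟨2 * (j : ℕ) + 2, by obtain ⟨k, hk⟩ := hn; have := j.isLt; omega⟩).permanent ^ 2 := by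
  set m := (n - 1) / 2
  have hm : n = 2 * m + 1 := by obtain ⟨k, hk⟩ := hn; omega
  set e := Equiv.ofBijective _ (parityIndex_bijective hm)
  have hzero (x y) (heven : ((e x : ℕ) + (e y : ℕ)) % 2 = 0) (hpos : 0 < (e x : ℕ) + e y) :
      A.submatrix e e x y = 0 :=
    hA _ _ (Nat.even_iff.mpr (by omega)) (by omega)
  rw [← Matrix.permanent_submatrix_equiv_self_s6 e,
    Matrix.permanent_eq_mul_permanent_mul_permanent_of_optionSum
      (fun b => hzero _ _ ?_ ?_) (fun b => hzero _ _ ?_ ?_)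
      (fun a b => hzero _ _ ?_ ?_) (fun a b => hzero _ _ ?_ ?_)]
  · rw [← Matrix.permanent_transpose (Matrix.of fun a b => _), sq, ← mul_assoc]
    congr 3
    ext a b
    exact hsymm _ _
  all_goals simp [e, parityIndex] <;> omega
end

section
/- Let $p>3$ be a prime and let $c,d$ be integers. Then $\det\left[(i^2+cij+dj^2)^{p-2}\right]_{0\le i,j\le p-1}\equiv 0\pmod p$. -/
/-!
Work in `𝔽_p` with `q = p - 2`, so that `x ^ (2 * q) = x ^ (p - 3)` for every `x`. The substitution
`x = u * y` shows that every column sum `∑ x, (x² + c x y + d y²) ^ q` equals `S * y ^ (p - 3)` with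
`S` independent of `y` (for `y = 0` it is `∑ x, x ^ (p - 3) = 0`), while row `0` is
`d ^ q * y ^ (p - 3)`. Hence `d ^ q • (sum of all rows) = S • (row 0)`, a nontrivial relation
unless `d ^ q = 0`, in which case row `0` vanishes.
-/

open Finset

theorem ZMod.sum_natCast_fin {n : ℕ} [NeZero n] {M : Type*} [AddCommMonoid M]
    (f : ZMod n → M) : ∑ i : Fin n, f (i : ℕ) = ∑ x : ZMod n, f x := by
  obtain ⟨m, rfl⟩ : ∃ m, n = m + 1 := Nat.exists_eq_succ_of_ne_zero (NeZero.ne n)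
  exact Fintype.sum_congr _ _ fun i => congrArg f (Fin.cast_val_eq_self i)

theorem Matrix.det_eq_zero_of_row_and_sum_rows_eq_mul {ι R : Type*} [Fintype ι]
    [DecidableEq ι] [Nontrivial ι] [CommRing R] [IsDomain R] (M : Matrix ι ι R) (i₀ : ι)
    (w : ι → R) (α β : R) (hrow : ∀ j, M i₀ j = α * w j) (hsum : ∀ j, ∑ i, M i j = β * w j) :
    M.det = 0 := by
  rcases eq_or_ne α 0 with hα | hα
  · exact det_eq_zero_of_row_eq_zero i₀ fun j => by rw [hrow, hα, zero_mul]
  obtain ⟨i₁, hi₁⟩ := exists_ne i₀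
  refine exists_vecMul_eq_zero_iff.mp ⟨α • 1 - Pi.single i₀ β, fun h => hα ?_, ?_⟩
  · simpa [hi₁] using congrFun h i₁
  · ext j
    simp only [vecMul, dotProduct, Pi.sub_apply, Pi.smul_apply, Pi.one_apply, smul_eq_mul, mul_one,
      Pi.single_apply, sub_mul, ite_mul, zero_mul, sum_sub_distrib, ← mul_sum, hsum, sum_ite_eq',
      mem_univ, ↓reduceIte, hrow, Pi.zero_apply]
    ring

namespace FiniteField

variable {K : Type*} [Field K] [Fintype K]

theorem pow_two_mul_card_sub_two (hK : 3 < Fintype.card K) (x : K) :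
    x ^ (2 * (Fintype.card K - 2)) = x ^ (Fintype.card K - 3) := by
  rcases eq_or_ne x 0 with rfl | hx
  · rw [zero_pow (by omega), zero_pow (by omega)]
  · rw [show 2 * (Fintype.card K - 2) = (Fintype.card K - 1) + (Fintype.card K - 3) by omega,
      pow_add, pow_card_sub_one_eq_one x hx, one_mul]

theorem sum_quadratic_form_pow_card_sub_two (hK : 3 < Fintype.card K) (a b c y : K) :
    ∑ x, (a * x ^ 2 + b * x * y + c * y ^ 2) ^ (Fintype.card K - 2)
      = (∑ u, (a * u ^ 2 + b * u + c) ^ (Fintype.card K - 2)) * y ^ (Fintype.card K - 3) := by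
  rcases eq_or_ne y 0 with rfl | hy
  · rw [zero_pow (by omega : Fintype.card K - 3 ≠ 0), mul_zero]
    simp_rw [mul_zero, add_zero, zero_pow two_ne_zero, mul_zero, add_zero, mul_pow, ← pow_mul,
      pow_two_mul_card_sub_two hK, ← mul_sum]
    rw [sum_pow_lt_card_sub_one K _ (by omega), mul_zero]
  · rw [← Equiv.sum_comp (Equiv.mulRight₀ y hy), sum_mul]
    refine Fintype.sum_congr _ _ fun u => ?_
    rw [Equiv.mulRight₀_apply, ← pow_two_mul_card_sub_two hK, pow_mul, ← mul_pow]
    ring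

end FiniteField

/-- For any prime `p > 3` and integers `c, d`, the determinant of the `p × p`
integer matrix with `(i,j)` entry `(i² + c·i·j + d·j²)^(p-2)` for `0 ≤ i, j ≤ p-1` is
divisible by `p`. -/
theorem stmt10 (p : ℕ) (hp : p.Prime) (hp3 : 3 < p) (c d : ℤ) :
    (p : ℤ) ∣
      (Matrix.of fun i j : Fin p =>
        (((i : ℕ) : ℤ) ^ 2 + c * ((i : ℕ) : ℤ) * ((j : ℕ) : ℤ)
          + d * ((j : ℕ) : ℤ) ^ 2) ^ (p - 2)).det := by
  have : Fact p.Prime := ⟨hp⟩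
  have : Nontrivial (Fin p) := Fin.nontrivial_iff_two_le.mpr (by omega)
  have hK : 3 < Fintype.card (ZMod p) := by rwa [ZMod.card]
  have hpow := FiniteField.pow_two_mul_card_sub_two hK
  have hsum := FiniteField.sum_quadratic_form_pow_card_sub_two hK 1 (c : ZMod p) d
  rw [ZMod.card] at hpow hsum
  rw [← ZMod.intCast_zmod_eq_zero_iff_dvd, Int.cast_det]
  refine Matrix.det_eq_zero_of_row_and_sum_rows_eq_mul _ 0
    (fun j => ((j : ℕ) : ZMod p) ^ (p - 3)) ((d : ZMod p) ^ (p - 2))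
    (∑ u : ZMod p, (1 * u ^ 2 + c * u + d) ^ (p - 2)) ?_ ?_
  · intro j
    simp [mul_pow, ← pow_mul, hpow]
  · intro j
    rw [← hsum, ← ZMod.sum_natCast_fin]
    simp
end

section
/- Let $p>3$ be a prime with $p\equiv 3\pmod 4$. Then for every integer $c$, $D_p(c,-1)\equiv 0\pmod p$. -/
/-!
Modulo `p` the vector `(j ^ ((p + 1) / 2))_j` lies in the kernel of the matrix. Indeed, row `i`
applied to it is the sum over `x ∈ 𝔽_p` of `f x = (i² + c i x - x²)^(p-2) x^((p+1)/2)`, and the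
involution `x ↦ -i²/x` of `𝔽_p` sends `f` to `-f`: it multiplies `i² + c i x - x²` by `-i²/x²`,
and the resulting power `(-i²)^(3(p-1)/2)` is `-1` since `3(p-1)/2` is odd when `p ≡ 3 (mod 4)`.
-/

/-- `D_p(c,d)`: the determinant of the `(p-1) × (p-1)` integer matrix with `(i,j)` entry
`(i² + c·i·j + d·j²)^(p-2)` for `1 ≤ i, j ≤ p-1`. -/
def Dp (p : ℕ) (c d : ℤ) : ℤ :=
  (Matrix.of fun i j : Fin (p - 1) =>
    (((i : ℕ) + 1 : ℤ) ^ 2 + c * ((i : ℕ) + 1 : ℤ) * ((j : ℕ) + 1 : ℤ)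
      + d * ((j : ℕ) + 1 : ℤ) ^ 2) ^ (p - 2)).det

open Finset Function

theorem ZMod.sum_eq_sum_fin_natCast_add_one {n : ℕ} [NeZero n] {M : Type*} [AddCommMonoid M]
    (f : ZMod n → M) (hf : f 0 = 0) :
    ∑ x, f x = ∑ j : Fin (n - 1), f ((j : ℕ) + 1) := by
  obtain ⟨k, rfl⟩ := Nat.exists_eq_add_one_of_ne_zero (NeZero.ne n)
  calc ∑ x, f x = ∑ i : Fin (k + 1), f (i : ℕ) :=
        Fintype.sum_equiv (ZMod.finEquiv (k + 1)).toEquiv.symm _ _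
          fun x => congrArg f (ZMod.natCast_zmod_val x).symm
    _ = ∑ j : Fin k, f ((j : ℕ) + 1) := by
        rw [Fin.sum_univ_succ]
        simp [hf]

theorem Fintype.sum_eq_zero_of_involutive_of_comp_eq_neg {α R : Type*} [Fintype α] [Ring R]
    [NoZeroDivisors R] (h2 : (2 : R) ≠ 0) {σ : α → α} (hσ : Involutive σ) {f : α → R}
    (hf : ∀ x, f (σ x) = -f x) : ∑ x, f x = 0 := by
  have hneg : ∑ x, f x = -∑ x, f x := by
    calc ∑ x, f x = ∑ x, f (σ x) := (hσ.bijective.sum_comp f).symm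
      _ = -∑ x, f x := by simp only [hf, sum_neg_distrib]
  have h2s : 2 * ∑ x, f x = 0 := by
    rw [two_mul]
    nth_rewrite 2 [hneg]
    exact add_neg_cancel _
  exact (mul_eq_zero.mp h2s).resolve_left h2

theorem FiniteField.sum_sq_add_mul_sub_sq_pow_mul_pow_eq_zero {K : Type*} [Field K] [Fintype K]
    (hK : Fintype.card K % 4 = 3) {a : K} (ha : a ≠ 0) (b : K) :
    ∑ x : K, (a ^ 2 + b * x - x ^ 2) ^ (Fintype.card K - 2) * x ^ ((Fintype.card K + 1) / 2)
      = 0 := by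
  set q := Fintype.card K
  set n := q - 2
  set m := (q + 1) / 2
  set Q : K → K := fun x => a ^ 2 + b * x - x ^ 2
  have hm : m ≠ 0 := by omega
  have hnm : 2 * (n + m) = 3 * (q - 1) := by omega
  -- `n + m = 3(q - 1)/2` is odd exactly because `q ≡ 3 (mod 4)`.
  have hodd : Odd (n + m) := Nat.odd_iff.mpr (by omega)
  have h2 : (2 : K) ≠ 0 :=
    Ring.two_ne_zero fun h => by rw [FiniteField.even_card_iff_char_two] at h; omega
  have ha2 : -a ^ 2 ≠ 0 := neg_ne_zero.mpr (pow_ne_zero 2 ha)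
  have hpow : (-a ^ 2) ^ (n + m) = -1 := by
    rw [hodd.neg_pow, ← pow_mul, hnm, pow_mul', FiniteField.pow_card_sub_one_eq_one a ha, one_pow]
  refine Fintype.sum_eq_zero_of_involutive_of_comp_eq_neg h2
    (σ := fun x => -a ^ 2 / x) (fun x => div_div_cancel₀ ha2) fun x => ?_
  rcases eq_or_ne x 0 with rfl | hx
  · simp [zero_pow hm]
  set w := -a ^ 2 / x
  show Q w ^ n * w ^ m = -(Q x ^ n * x ^ m)
  have hwx : w * x = -a ^ 2 := div_mul_cancel₀ _ hx
  have hQ : Q w * x ^ 2 = -a ^ 2 * Q x := by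
    simp only [Q, w]
    field_simp
    ring
  have hx1 : x ^ (2 * n + 2 * m) = 1 := by
    rw [← mul_add, hnm, pow_mul', FiniteField.pow_card_sub_one_eq_one x hx, one_pow]
  -- keep `ring` from unfolding `w = -a² / x`
  clear_value Q w
  refine mul_right_cancel₀ (pow_ne_zero (2 * n + m) hx) ?_
  calc Q w ^ n * w ^ m * x ^ (2 * n + m) = (Q w * x ^ 2) ^ n * (w * x) ^ m := by ring
    _ = (-a ^ 2) ^ (n + m) * Q x ^ n := by rw [hQ, hwx]; ring
    _ = -(Q x ^ n * x ^ m) * x ^ (2 * n + m) := by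
        rw [hpow]; linear_combination (Q x ^ n) * hx1

theorem stmt13_general (p : ℕ) (hp : p.Prime) (hp4 : p % 4 = 3) (c : ℤ) :
    (p : ℤ) ∣ Dp p c (-1) := by
  have := Fact.mk hp
  rw [← ZMod.intCast_zmod_eq_zero_iff_dvd, Dp, Int.cast_det, ← Matrix.exists_mulVec_eq_zero_iff]
  refine ⟨fun j => ((j : ℕ) + 1 : ZMod p) ^ ((p + 1) / 2), fun h => ?_, funext fun i => ?_⟩
  · simpa using congrFun h ⟨0, Nat.sub_pos_of_lt hp.one_lt⟩
  have hi : ((i : ℕ) + 1 : ZMod p) ≠ 0 := by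
    rw [← Nat.cast_succ, Ne, ZMod.natCast_eq_zero_iff]
    exact fun h => Nat.succ_ne_zero _ (Nat.eq_zero_of_dvd_of_lt h (by omega))
  have hrow := FiniteField.sum_sq_add_mul_sub_sq_pow_mul_pow_eq_zero
    (by rwa [ZMod.card]) hi (c * ((i : ℕ) + 1))
  rw [ZMod.card, ZMod.sum_eq_sum_fin_natCast_add_one _
    (by simp [zero_pow (by omega : (p + 1) / 2 ≠ 0)])] at hrow
  simp only [Matrix.mulVec, dotProduct, Matrix.map_apply, Matrix.of_apply, Pi.zero_apply]
  push_cast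
  exact (sum_congr rfl fun j _ => by ring).trans hrow

/-- For any prime `p > 3` with `p ≡ 3 (mod 4)` and any integer `c`,
`D_p(c, -1) ≡ 0 (mod p)`. -/
theorem stmt13 (p : ℕ) (hp : p.Prime) (hp3 : 3 < p) (hp4 : p % 4 = 3) (c : ℤ) :
    (p : ℤ) ∣ Dp p c (-1) :=
  stmt13_general p hp hp4 c
end

section
/- Let $p>3$ be a prime with $p\equiv 3\pmod 4$. Then $D_p(2,2)\equiv 0\pmod p$. -/
section FiniteField

variable {F : Type*} [Field F]

lemma sq_add_one_ne_zero_of_not_isSquare_neg_one (h : ¬IsSquare (-1 : F)) (u : F) :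
    u ^ 2 + 1 ≠ 0 :=
  fun hu => h ⟨u, by linear_combination -hu⟩

lemma inv_sq_add_one_add_inv_inv_sq_add_one (h : ¬IsSquare (-1 : F)) {u : F} (hu : u ≠ 0) :
    (u ^ 2 + 1)⁻¹ + (u⁻¹ ^ 2 + 1)⁻¹ = 1 := by
  have hu2 := sq_add_one_ne_zero_of_not_isSquare_neg_one h u
  rw [show u⁻¹ ^ 2 + 1 = (u ^ 2 + 1) / u ^ 2 by field_simp; ring, inv_div, inv_eq_one_div,
    ← add_div, add_comm, div_self hu2]

variable [Fintype F]

lemma two_mul_sum_inv_sq_add_one (h : ¬IsSquare (-1 : F)) :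
    2 * ∑ u : F, (u ^ 2 + 1)⁻¹ = 1 := by
  have hinv : ∑ u : F, (u⁻¹ ^ 2 + 1)⁻¹ = ∑ u : F, (u ^ 2 + 1)⁻¹ :=
    Equiv.sum_comp (Function.Involutive.toPerm _ inv_inv) fun u : F => (u ^ 2 + 1)⁻¹
  calc (2 : F) * ∑ u : F, (u ^ 2 + 1)⁻¹
      = ∑ u : F, ((u ^ 2 + 1)⁻¹ + (u⁻¹ ^ 2 + 1)⁻¹ - 1) + (Fintype.card F : F) := by
        rw [Finset.sum_sub_distrib, Finset.sum_add_distrib, hinv, Finset.sum_const,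
          Finset.card_univ, nsmul_one]
        ring
    _ = 1 := by
        rw [FiniteField.cast_card_eq_zero, add_zero, Fintype.sum_eq_single 0 fun u hu => by
          rw [inv_sq_add_one_add_inv_inv_sq_add_one h hu, sub_self]]
        norm_num

lemma sum_inv_sq_add_two_mul_add_two_mul_sq (h : ¬IsSquare (-1 : F)) {x : F} (hx : x ≠ 0) :
    ∑ y : F, (x ^ 2 + 2 * x * y + 2 * y ^ 2)⁻¹ = (x ^ 2)⁻¹ := by
  have h2 : (2 : F) ≠ 0 := left_ne_zero_of_mul_eq_one (two_mul_sum_inv_sq_add_one h)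
  have hsubst : ∀ y : F, (x ^ 2 + 2 * x * y + 2 * y ^ 2)⁻¹
      = 2 * (x ^ 2)⁻¹ * (((2 / x) * y + 1) ^ 2 + 1)⁻¹ := fun y => by
    rw [← inv_inv (2 : F), ← mul_inv, ← mul_inv]
    congr 1
    field_simp
    ring
  have hshift := Fintype.sum_equiv
    ((Equiv.mulLeft₀ (2 / x) (div_ne_zero h2 hx)).trans (Equiv.addRight 1))
    (fun y => ((2 / x * y + 1) ^ 2 + 1)⁻¹) (fun v => (v ^ 2 + 1)⁻¹) fun _ => rfl
  rw [Finset.sum_congr rfl fun y _ => hsubst y, ← Finset.mul_sum, hshift, mul_comm 2,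
    mul_assoc, two_mul_sum_inv_sq_add_one h, mul_one]

lemma FiniteField.pow_card_sub_two_eq_inv (hF : Fintype.card F ≠ 2) (a : F) :
    a ^ (Fintype.card F - 2) = a⁻¹ := by
  have hcard := Fintype.one_lt_card (α := F)
  rcases eq_or_ne a 0 with rfl | ha
  · rw [inv_zero, zero_pow (by omega)]
  · refine eq_inv_of_mul_eq_one_left ?_
    rw [← pow_succ, show Fintype.card F - 2 + 1 = Fintype.card F - 1 by omega,
      FiniteField.pow_card_sub_one_eq_one a ha]

end FiniteField

lemma Matrix.det_eq_zero_of_sum_row_eq_zero {n R : Type*} [Fintype n] [DecidableEq n]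
    [Nonempty n] [CommRing R] [IsDomain R] {A : Matrix n n R} (h : ∀ i, ∑ j, A i j = 0) :
    A.det = 0 := by
  refine Matrix.exists_mulVec_eq_zero_iff.mp ⟨1, one_ne_zero, ?_⟩
  ext i
  simpa [Matrix.mulVec, dotProduct] using h i

lemma ZMod.sum_eq_add_sum_fin {M : Type*} [AddCommMonoid M] {n : ℕ} [NeZero n]
    (g : ZMod n → M) : ∑ y, g y = g 0 + ∑ j : Fin (n - 1), g ((j : ℕ) + 1) := by
  obtain ⟨m, rfl⟩ := Nat.exists_eq_add_one_of_ne_zero (NeZero.ne n)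
  refine (Fin.sum_univ_succ (n := m) g).trans
    (congrArg _ (Fintype.sum_congr _ _ fun j => congrArg g (ZMod.val_injective (m + 1) ?_)))
  rw [← Nat.cast_add_one, ZMod.val_natCast_of_lt (by omega)]
  rfl

theorem stmt14_general (p : ℕ) (hp : p.Prime) (hp4 : p % 4 = 3) :
    (p : ℤ) ∣ Dp p 2 2 := by
  have : Fact p.Prime := ⟨hp⟩
  have : NeZero (p - 1) := ⟨by have := hp.two_le; omega⟩
  have hsq : ¬IsSquare (-1 : ZMod p) := by simpa [ZMod.exists_sq_eq_neg_one_iff]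
  have hinv : ∀ a : ZMod p, a ^ (p - 2) = a⁻¹ := by
    simpa using FiniteField.pow_card_sub_two_eq_inv (F := ZMod p) (by simp; omega)
  rw [← ZMod.intCast_zmod_eq_zero_iff_dvd, Dp, Int.cast_det]
  refine Matrix.det_eq_zero_of_sum_row_eq_zero fun i => ?_
  have hx : ((i : ℕ) + 1 : ZMod p) ≠ 0 := by
    rw [← Nat.cast_add_one, Ne, ZMod.natCast_eq_zero_iff]
    exact fun h => Nat.succ_ne_zero _ (Nat.eq_zero_of_dvd_of_lt h (by omega))
  set x : ZMod p := (i : ℕ) + 1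
  have hrow := ZMod.sum_eq_add_sum_fin fun y => (x ^ 2 + 2 * x * y + 2 * y ^ 2)⁻¹
  rw [sum_inv_sq_add_two_mul_add_two_mul_sq hsq hx] at hrow
  simp only [Matrix.map_apply, Matrix.of_apply]
  push_cast [hinv]
  simpa using hrow

/-- For any prime `p > 3` with `p ≡ 3 (mod 4)`, `D_p(2, 2) ≡ 0 (mod p)`. -/
theorem stmt14 (p : ℕ) (hp : p.Prime) (hp3 : 3 < p) (hp4 : p % 4 = 3) :
    (p : ℤ) ∣ Dp p 2 2 :=
  stmt14_general p hp hp4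
end

section
/- Let $p>3$ be a prime and let $c,d$ be integers with $p\nmid d$. Then for every $j\in\{1,\dots,p-1\}$, $\left(1-2d(c^2-4d)^{(p-3)/2}\right)(dj^2)^{p-2}+\sum_{i=1}^{p-1}(i^2+cij+dj^2)^{p-2}\equiv 0\pmod p$. -/
/-!
Modulo `p`, the sum over `i` runs over all of `𝔽_p` except `i = 0`, whose term is
`(d j²)^(p-2) = (d j²)⁻¹`. Completing the square and expanding binomially, the power sums
`∑_y y^(2k)` vanish except for `2k = p - 1`, and `C(p-2, k) ≡ (-1)^k (k+1)` then gives
`∑_{x ∈ 𝔽_p} (x² + Cx + D)^(p-2) = 2 (C² - 4D)^((p-3)/2)`. With `C = cj`, `D = dj²` and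
`(j²)^((p-3)/2) = j⁻²`, the congruence becomes an identity in `𝔽_p`.
-/

open Finset

namespace FiniteField

variable {K : Type*} [Field K] [Fintype K]

local notation "q" => Fintype.card K

theorem sum_pow_eq_sum_units_pow [DecidableEq K] {n : ℕ} (hn : n ≠ 0) :
    ∑ x : K, x ^ n = ∑ x : Kˣ, (x : K) ^ n := by
  rw [← sum_erase univ (f := fun x : K ↦ x ^ n) (zero_pow hn),
    sum_subtype (p := (· ≠ 0)) _ (fun x ↦ by simp) (fun x : K ↦ x ^ n)]
  exact (Fintype.sum_equiv unitsEquivNeZero _ _ fun _ ↦ rfl).symm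

theorem sum_pow_of_lt_two_mul {n : ℕ} (hn : n < 2 * (q - 1)) :
    ∑ x : K, x ^ n = if n = q - 1 then -1 else 0 := by
  classical
  rcases eq_or_ne n 0 with rfl | hn0
  · have : q - 1 ≠ 0 := by have := Fintype.one_lt_card (α := K); omega
    simp [Ne.symm this]
  rw [sum_pow_eq_sum_units_pow hn0, sum_pow_units]
  exact if_congr ⟨fun h ↦ Nat.eq_of_dvd_of_lt_two_mul hn0 h hn, fun h ↦ h ▸ dvd_rfl⟩ rfl rfl

theorem pow_card_sub_two_eq_inv_s16 {a : K} (ha : a ≠ 0) : a ^ (q - 2) = a⁻¹ := by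
  have := Fintype.one_lt_card (α := K)
  refine eq_inv_of_mul_eq_one_left ?_
  rw [← pow_succ, show q - 2 + 1 = q - 1 by omega, pow_card_sub_one_eq_one a ha]

theorem sq_pow_card_sub_three_div_two (hq : Odd q) {a : K} (ha : a ≠ 0) :
    (a ^ 2) ^ ((q - 3) / 2) = (a ^ 2)⁻¹ := by
  have := Fintype.one_lt_card (α := K)
  obtain ⟨r, hr⟩ := hq
  refine eq_inv_of_mul_eq_one_left ?_
  rw [← pow_mul, ← pow_add, show 2 * ((q - 3) / 2) + 2 = q - 1 by omega,
    pow_card_sub_one_eq_one a ha]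

theorem sum_sq_add_pow_card_sub_two (hq : Odd q) (b : K) :
    ∑ y : K, (y ^ 2 + b) ^ (q - 2) = -((q - 2).choose ((q - 1) / 2) : K) * b ^ ((q - 3) / 2) := by
  classical
  have := Fintype.one_lt_card (α := K)
  obtain ⟨r, hr⟩ := hq
  have hsq : ∀ k ∈ range (q - 2 + 1),
      ∑ y : K, y ^ (2 * k) = if k = (q - 1) / 2 then -1 else 0 := fun k hk ↦ by
    rw [sum_pow_of_lt_two_mul (by rw [mem_range] at hk; omega)]
    exact if_congr (by omega) rfl rfl
  simp_rw [add_pow, ← pow_mul]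
  rw [sum_comm]
  simp_rw [mul_assoc, ← sum_mul]
  rw [sum_congr rfl fun k hk ↦ by rw [hsq k hk]]
  simp only [ite_mul, neg_one_mul, zero_mul]
  rw [sum_ite_eq', if_pos (by simp; omega), show q - 2 - (q - 1) / 2 = (q - 3) / 2 by omega]
  ring
end FiniteField

namespace CharP

variable {R : Type*} [CommRing R] {p : ℕ} [CharP R p]

theorem cast_choose_sub_one (hp : p.Prime) {k : ℕ} (hk : k ≤ p - 1) :
    ((p - 1).choose k : R) = (-1) ^ k := by
  induction k with
  | zero => simp
  | succ k ih =>
    have hpascal : p.choose (k + 1) = (p - 1).choose k + (p - 1).choose (k + 1) := by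
      rw [← Nat.choose_succ_succ', Nat.sub_add_cancel hp.one_le]
    have hzero : (p.choose (k + 1) : R) = 0 :=
      (cast_eq_zero_iff R p _).2 (hp.dvd_choose_self k.succ_ne_zero (by omega))
    rw [hpascal, Nat.cast_add, ih (by omega)] at hzero
    rw [pow_succ, mul_neg_one, eq_neg_iff_add_eq_zero, add_comm, hzero]

theorem cast_choose_sub_two (hp : p.Prime) {k : ℕ} (hk : k ≤ p - 2) :
    ((p - 2).choose k : R) = (-1) ^ k * (k + 1) := by
  induction k with
  | zero => simp
  | succ k ih =>
    have hpascal : (p - 1).choose (k + 1) = (p - 2).choose k + (p - 2).choose (k + 1) := by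
      rw [← Nat.choose_succ_succ', show p - 2 + 1 = p - 1 by omega]
    have h := cast_choose_sub_one (R := R) hp (k := k + 1) (by omega)
    rw [hpascal, Nat.cast_add, ih (by omega)] at h
    rw [eq_sub_of_add_eq' h]
    push_cast
    ring

end CharP

theorem Fintype.sum_comp_quadratic {K M : Type*} [Field K] [Fintype K] [AddCommMonoid M]
    (h2 : (2 : K) ≠ 0) (C D : K) (g : K → M) :
    ∑ x, g (x ^ 2 + C * x + D) = ∑ y, g (y ^ 2 - (C ^ 2 - 4 * D) / 4) := by
  have h4 : (4 : K) ≠ 0 := by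
    rw [show (4 : K) = 2 * 2 by norm_num]; exact mul_ne_zero h2 h2
  exact Fintype.sum_equiv (Equiv.addRight (C / 2)) _ _ fun x ↦ by
    congr 1; simp only [Equiv.coe_addRight]; field_simp; ring

theorem ZMod.sum_Icc_natCast {n : ℕ} [NeZero n] {M : Type*} [AddCommGroup M] (f : ZMod n → M) :
    ∑ i ∈ Icc 1 (n - 1), f i = ∑ x, f x - f 0 := by
  have hrange : ∑ i ∈ range n, f i = ∑ x, f x :=
    sum_bij' (fun i _ ↦ i) (fun x _ ↦ x.val) (fun _ _ ↦ mem_univ _)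
      (fun x _ ↦ mem_range.2 x.val_lt) (fun _ hi ↦ ZMod.val_cast_of_lt (mem_range.1 hi))
      (fun x _ ↦ ZMod.natCast_zmod_val x) (fun _ _ ↦ rfl)
  rw [← Finset.Ico_add_one_right_eq_Icc, Nat.sub_add_cancel (NeZero.one_le),
    sum_Ico_eq_sub _ NeZero.one_le, hrange, sum_range_one, Nat.cast_zero]

namespace ZMod

variable {p : ℕ} [Fact p.Prime]

theorem two_ne_zero_of_ne_two (hp2 : p ≠ 2) : (2 : ZMod p) ≠ 0 :=
  Ring.two_ne_zero (by rwa [ringChar_zmod_n])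

theorem sum_sq_add_pow_sub_two (hp2 : p ≠ 2) (b : ZMod p) :
    ∑ y : ZMod p, (y ^ 2 + b) ^ (p - 2) = (-b) ^ ((p - 3) / 2) / 2 := by
  have hp := Fact.out (p := p.Prime)
  have hodd : Odd p := hp.odd_of_ne_two hp2
  have h := FiniteField.sum_sq_add_pow_card_sub_two (K := ZMod p) (by rwa [card]) b
  rw [card, CharP.cast_choose_sub_two hp (by omega)] at h
  rw [h, eq_div_iff (two_ne_zero_of_ne_two hp2)]
  obtain ⟨m, rfl⟩ : ∃ m, p = 2 * m + 3 := by
    obtain ⟨r, hr⟩ := hodd; exact ⟨r - 1, by have := hp.two_le; omega⟩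
  have hp0 := natCast_self (2 * m + 3)
  push_cast at hp0
  rw [show (2 * m + 3 - 1) / 2 = m + 1 by omega, show (2 * m + 3 - 3) / 2 = m by omega]
  rw [neg_pow b, pow_succ]
  push_cast
  -- `C(p - 2, m + 1) ≡ (-1)^(m+1) (m + 2)` and `2 (m + 2) = p + 1 ≡ 1`
  linear_combination (-1) ^ m * b ^ m * hp0

theorem sum_quadratic_pow_sub_two (hp2 : p ≠ 2) (C D : ZMod p) :
    ∑ x : ZMod p, (x ^ 2 + C * x + D) ^ (p - 2) = 2 * (C ^ 2 - 4 * D) ^ ((p - 3) / 2) := by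
  have h2 := two_ne_zero_of_ne_two hp2
  have hodd : Odd p := (Fact.out : p.Prime).odd_of_ne_two hp2
  have h4 : (4 : ZMod p) ^ ((p - 3) / 2) * 4 = 1 := by
    have := (Fact.out : p.Prime).two_le
    obtain ⟨r, hr⟩ := hodd
    rw [show (4 : ZMod p) = 2 ^ 2 by norm_num, ← pow_succ, ← pow_mul,
      show 2 * ((p - 3) / 2 + 1) = p - 1 by omega, pow_card_sub_one_eq_one h2]
  rw [Fintype.sum_comp_quadratic h2 C D (· ^ (p - 2))]
  simp only [sub_eq_add_neg (_ ^ 2)]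
  rw [sum_sq_add_pow_sub_two hp2, neg_neg, div_pow, div_div,
    div_eq_iff (mul_ne_zero (left_ne_zero_of_mul_eq_one h4) h2)]
  linear_combination -(C ^ 2 - 4 * D) ^ ((p - 3) / 2) * h4

end ZMod

/-- Let `p > 3` be a prime and `c, d` integers with `p ∤ d`. Then for every
`j ∈ {1, …, p-1}`,
`(1 - 2d(c² - 4d)^((p-3)/2))·(d·j²)^(p-2) + ∑_{i=1}^{p-1} (i² + c·i·j + d·j²)^(p-2) ≡ 0 (mod p)`. -/
theorem stmt16 (p : ℕ) (hp : p.Prime) (hp3 : 3 < p) (c d : ℤ)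
    (hd : ¬ (p : ℤ) ∣ d) :
    ∀ j : ℕ, 1 ≤ j → j ≤ p - 1 →
      (1 - 2 * d * (c ^ 2 - 4 * d) ^ ((p - 3) / 2)) * (d * (j : ℤ) ^ 2) ^ (p - 2) +
        ∑ i ∈ Finset.Icc 1 (p - 1),
          ((i : ℤ) ^ 2 + c * (i : ℤ) * (j : ℤ) + d * (j : ℤ) ^ 2) ^ (p - 2)
        ≡ 0 [ZMOD p] := by
  intro j hj1 hjp
  have := Fact.mk hp
  have hp2 : p ≠ 2 := by omega
  have hj : (j : ZMod p) ≠ 0 := by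
    rw [Ne, ZMod.natCast_eq_zero_iff]
    exact fun h ↦ absurd (Nat.le_of_dvd hj1 h) (by omega)
  have hd' : (d : ZMod p) ≠ 0 := by rwa [Ne, ZMod.intCast_zmod_eq_zero_iff_dvd]
  set C : ZMod p := (c : ZMod p)
  set D : ZMod p := (d : ZMod p)
  set J : ZMod p := (j : ZMod p)
  have hsum : ∑ i ∈ Icc 1 (p - 1), ((i : ZMod p) ^ 2 + C * i * J + D * J ^ 2) ^ (p - 2) =
      2 * ((C ^ 2 - 4 * D) * J ^ 2) ^ ((p - 3) / 2) - (D * J ^ 2) ^ (p - 2) := by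
    simp_rw [mul_right_comm C]
    rw [ZMod.sum_Icc_natCast (fun x ↦ (x ^ 2 + C * J * x + D * J ^ 2) ^ (p - 2)),
      ZMod.sum_quadratic_pow_sub_two hp2]
    ring
  rw [Int.modEq_zero_iff_dvd, ← ZMod.intCast_zmod_eq_zero_iff_dvd]
  push_cast
  have hDJ := FiniteField.pow_card_sub_two_eq_inv_s16 (mul_ne_zero hd' (pow_ne_zero 2 hj))
  have hJ := FiniteField.sq_pow_card_sub_three_div_two
    (by rw [ZMod.card]; exact hp.odd_of_ne_two hp2) hj
  rw [ZMod.card] at hDJ hJ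
  rw [hsum, hDJ, mul_pow, hJ]
  field_simp
  ring
end
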